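/- Assume φ₁, φ₂ : [0,∞) → ℝ are continuous with positive bounds and s ↦ Φᵢ(s²) is strictly convex for i = 1, 2. Then the Gâteaux derivative I₁' of I₁ on W = H₀¹(Ω)² is strictly monotone: for all (u,v) ≠ (ū,v̄) in W, ⟨I₁'(u,v) − I₁'(ū,v̄), (u,v) − (ū,v̄)⟩ > 0. -/

import Mathlib

/-!
Write `ξ = (u, ∇u)` and `η = (ū, ∇ū)` pointwise as vectors of `ℝ × ℝᴺ` with the Euclidean norm.
The integrand is then `⟪A ξ - A η, ξ - η⟫` for the radial field `A ξ = φ(‖ξ‖²/2) ξ`, one such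
term per component. With `a = ‖ξ‖`, `b = ‖η‖` this equals
`(a b - ⟪ξ, η⟫)(φ(a²/2) + φ(b²/2)) + (a - b)(ψ a - ψ b)` where `ψ t = t φ(t²/2)`: the first term
is nonnegative by Cauchy–Schwarz and the second because `ψ`, the derivative of the strictly convex
function `t ↦ Φ(t²/2)`, is strictly increasing. The sum vanishes only if `ξ = η`, so the
nonnegative integrand can only have zero integral when `(u, v) = (ū, v̄)` almost everywhere.
-/

open MeasureTheory RealInnerProductSpace

/-- Integrand of `⟨I₁'(u,v) − I₁'(ū,v̄), (u,v) − (ū,v̄)⟩`. -/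
noncomputable def monoIntegrand {N : ℕ} (φ₁ φ₂ : ℝ → ℝ)
    (u v u' v' : EuclideanSpace ℝ (Fin N) → ℝ)
    (gu gv gu' gv' : EuclideanSpace ℝ (Fin N) → EuclideanSpace ℝ (Fin N))
    (x : EuclideanSpace ℝ (Fin N)) : ℝ :=
  φ₁ ((u x ^ 2 + ‖gu x‖ ^ 2) / 2) * (u x * (u x - u' x) + ⟪gu x, gu x - gu' x⟫)
    - φ₁ ((u' x ^ 2 + ‖gu' x‖ ^ 2) / 2) * (u' x * (u x - u' x) + ⟪gu' x, gu x - gu' x⟫)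
    + φ₂ ((v x ^ 2 + ‖gv x‖ ^ 2) / 2) * (v x * (v x - v' x) + ⟪gv x, gv x - gv' x⟫)
    - φ₂ ((v' x ^ 2 + ‖gv' x‖ ^ 2) / 2) * (v' x * (v x - v' x) + ⟪gv' x, gv x - gv' x⟫)

open Set

lemma StrictConvexOn.comp_mul_left {f : ℝ → ℝ} (hf : StrictConvexOn ℝ univ f) {c : ℝ}
    (hc : c ≠ 0) : StrictConvexOn ℝ univ fun x => f (c * x) := by
  refine ⟨convex_univ, fun x _ y _ hxy a b ha hb hab => ?_⟩
  have := hf.2 (mem_univ (c * x)) (mem_univ (c * y)) (by simpa [hc] using hxy) ha hb hab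
  simpa only [smul_eq_mul, mul_add, mul_left_comm] using this

lemma StrictConvexOn.strictMonoOn_of_hasDerivAt {S : Set ℝ} {f f' : ℝ → ℝ}
    (hf : StrictConvexOn ℝ S f) (hf' : ∀ x ∈ S, HasDerivAt f (f' x) x) : StrictMonoOn f' S :=
  fun x hx y hy hxy => (hf.lt_slope_of_hasDerivAt hx hy hxy (hf' x hx)).trans
    (hf.slope_lt_of_hasDerivAt hx hy hxy (hf' y hy))

lemma StrictMonoOn.sub_mul_sub_pos {s : Set ℝ} {f : ℝ → ℝ} (hf : StrictMonoOn f s) {a b : ℝ}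
    (ha : a ∈ s) (hb : b ∈ s) (hab : a ≠ b) : 0 < (a - b) * (f a - f b) := by
  rcases hab.lt_or_gt with h | h
  · exact mul_pos_of_neg_of_neg (sub_neg.2 h) (sub_neg.2 (hf ha hb h))
  · exact mul_pos (sub_pos.2 h) (sub_pos.2 (hf hb ha h))

lemma integral_hasDerivAt_right_of_continuousOn_Ici {φ : ℝ → ℝ} (hc : ContinuousOn φ (Ici 0))
    {s : ℝ} (hs : 0 < s) : HasDerivAt (fun s => ∫ τ in (0 : ℝ)..s, φ τ) (φ s) s :=
  intervalIntegral.integral_hasDerivAt_right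
    ((hc.mono (by simp [uIcc_of_le hs.le, Icc_subset_Ici_self])).intervalIntegrable)
    ⟨Ioi 0, Ioi_mem_nhds hs, (hc.mono Ioi_subset_Ici_self).aestronglyMeasurable measurableSet_Ioi⟩
    ((hc s hs.le).continuousAt (Ici_mem_nhds hs))

lemma strictMonoOn_mul_apply_sq_half {φ Φ : ℝ → ℝ} (hc : ContinuousOn φ (Ici 0))
    (hφ : ∀ s, 0 ≤ s → 0 < φ s) (hΦ : ∀ s, Φ s = ∫ τ in (0 : ℝ)..s, φ τ)
    (hconv : StrictConvexOn ℝ univ fun s => Φ (s ^ 2)) :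
    StrictMonoOn (fun t => t * φ (t ^ 2 / 2)) (Ici 0) := by
  have hconv' : StrictConvexOn ℝ univ fun t => Φ (t ^ 2 / 2) := by
    convert hconv.comp_mul_left (inv_ne_zero (Real.sqrt_ne_zero'.2 two_pos)) using 3
    rw [mul_pow, inv_pow, Real.sq_sqrt zero_le_two, inv_mul_eq_div]
  have hderiv : ∀ t ∈ Ioi (0 : ℝ), HasDerivAt (fun t => Φ (t ^ 2 / 2)) (t * φ (t ^ 2 / 2)) t := by
    intro t (ht : 0 < t)
    rw [show Φ = _ from funext hΦ]
    have h := (integral_hasDerivAt_right_of_continuousOn_Ici hc (by positivity : 0 < t ^ 2 / 2)).comp t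
      ((hasDerivAt_pow 2 t).div_const 2)
    exact h.congr_deriv (by norm_num; ring)
  have hmono := (hconv'.subset (subset_univ _) (convex_Ioi 0)).strictMonoOn_of_hasDerivAt hderiv
  intro t ht t' ht' htt'
  rcases (mem_Ici.1 ht).eq_or_lt with rfl | ht
  · simpa using mul_pos htt' (hφ _ (by positivity))
  · exact hmono ht (ht.trans htt') htt'

section RadialField

variable {F : Type*} [NormedAddCommGroup F] [InnerProductSpace ℝ F]

/-- The gradient of `ξ ↦ Φ (‖ξ‖² / 2)` when `Φ' = φ`. -/
noncomputable def radialField (φ : ℝ → ℝ) (ξ : F) : F := φ (‖ξ‖ ^ 2 / 2) • ξ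

variable {φ : ℝ → ℝ} (hφ : ∀ s, 0 ≤ s → 0 < φ s)
  (hψ : StrictMonoOn (fun t => t * φ (t ^ 2 / 2)) (Ici 0))
include hφ hψ

lemma inner_radialField_sub_pos {ξ η : F} (hξη : ξ ≠ η) :
    0 < ⟪radialField φ ξ - radialField φ η, ξ - η⟫ := by
  have hexp : ⟪radialField φ ξ - radialField φ η, ξ - η⟫ =
      (‖ξ‖ * ‖η‖ - ⟪ξ, η⟫) * (φ (‖ξ‖ ^ 2 / 2) + φ (‖η‖ ^ 2 / 2))
        + (‖ξ‖ - ‖η‖) * (‖ξ‖ * φ (‖ξ‖ ^ 2 / 2) - ‖η‖ * φ (‖η‖ ^ 2 / 2)) := by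
    simp only [radialField, inner_sub_left, inner_sub_right, real_inner_smul_left,
      real_inner_self_eq_norm_sq, real_inner_comm ξ η]
    ring
  have hCS : ⟪ξ, η⟫ ≤ ‖ξ‖ * ‖η‖ := real_inner_le_norm ξ η
  have hφξ := hφ (‖ξ‖ ^ 2 / 2) (by positivity)
  have hφη := hφ (‖η‖ ^ 2 / 2) (by positivity)
  rw [hexp]
  rcases eq_or_ne ‖ξ‖ ‖η‖ with hnorm | hnorm
  · have hdist : 0 < ‖ξ - η‖ ^ 2 := pow_pos (norm_pos_iff.2 (sub_ne_zero.2 hξη)) 2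
    have hT : ⟪ξ, η⟫ < ‖ξ‖ * ‖η‖ := by
      rw [norm_sub_sq_real, hnorm] at hdist
      rw [hnorm]
      linarith
    exact add_pos_of_pos_of_nonneg (mul_pos (sub_pos.2 hT) (add_pos hφξ hφη)) (by simp [hnorm])
  · have hY := hψ.sub_mul_sub_pos (mem_Ici.2 (norm_nonneg ξ)) (mem_Ici.2 (norm_nonneg η)) hnorm
    have hX : 0 ≤ (‖ξ‖ * ‖η‖ - ⟪ξ, η⟫) * (φ (‖ξ‖ ^ 2 / 2) + φ (‖η‖ ^ 2 / 2)) :=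
      mul_nonneg (sub_nonneg.2 hCS) (by linarith)
    exact add_pos_of_nonneg_of_pos hX hY

lemma inner_radialField_sub_nonneg (ξ η : F) :
    0 ≤ ⟪radialField φ ξ - radialField φ η, ξ - η⟫ := by
  rcases eq_or_ne ξ η with rfl | hξη
  · simp
  · exact (inner_radialField_sub_pos hφ hψ hξη).le

lemma inner_radialField_sub_eq_zero_iff {ξ η : F} :
    ⟪radialField φ ξ - radialField φ η, ξ - η⟫ = 0 ↔ ξ = η := by
  refine ⟨fun h => ?_, fun h => by simp [h]⟩
  by_contra hξη
  exact (inner_radialField_sub_pos hφ hψ hξη).ne' h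

end RadialField

lemma monoIntegrand_eq {N : ℕ} (φ₁ φ₂ : ℝ → ℝ) (u v u' v' : EuclideanSpace ℝ (Fin N) → ℝ)
    (gu gv gu' gv' : EuclideanSpace ℝ (Fin N) → EuclideanSpace ℝ (Fin N))
    (x : EuclideanSpace ℝ (Fin N)) :
    monoIntegrand φ₁ φ₂ u v u' v' gu gv gu' gv' x =
      ⟪radialField φ₁ (WithLp.toLp 2 (u x, gu x)) - radialField φ₁ (WithLp.toLp 2 (u' x, gu' x)),
        WithLp.toLp 2 (u x, gu x) - WithLp.toLp 2 (u' x, gu' x)⟫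
      + ⟪radialField φ₂ (WithLp.toLp 2 (v x, gv x)) - radialField φ₂ (WithLp.toLp 2 (v' x, gv' x)),
        WithLp.toLp 2 (v x, gv x) - WithLp.toLp 2 (v' x, gv' x)⟫ := by
  simp only [monoIntegrand, radialField, WithLp.prod_norm_sq_eq_of_L2, inner_sub_left,
    inner_sub_right, inner_smul_left, WithLp.prod_inner_apply, WithLp.toLp_fst, WithLp.toLp_snd,
    Real.norm_eq_abs, sq_abs, RCLike.inner_apply, Real.ringHom_apply, inner_self_eq_norm_sq_to_K,
    mul_comm]
  ring

theorem stmt5_general (N : ℕ) (Ω : Set (EuclideanSpace ℝ (Fin N)))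
    (φ₁ φ₂ : ℝ → ℝ) (φ₁0 φ₁m φ₂0 φ₂m : ℝ) (h10 : 0 < φ₁0) (h20 : 0 < φ₂0)
    (hc1 : ContinuousOn φ₁ (Set.Ici 0)) (hc2 : ContinuousOn φ₂ (Set.Ici 0))
    (hb1 : ∀ s : ℝ, 0 ≤ s → φ₁0 ≤ φ₁ s ∧ φ₁ s ≤ φ₁m)
    (hb2 : ∀ s : ℝ, 0 ≤ s → φ₂0 ≤ φ₂ s ∧ φ₂ s ≤ φ₂m)
    (Φ₁ Φ₂ : ℝ → ℝ)
    (hΦ₁ : ∀ s, Φ₁ s = ∫ τ in (0:ℝ)..s, φ₁ τ)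
    (hΦ₂ : ∀ s, Φ₂ s = ∫ τ in (0:ℝ)..s, φ₂ τ)
    (hconv1 : StrictConvexOn ℝ Set.univ (fun s : ℝ => Φ₁ (s ^ 2)))
    (hconv2 : StrictConvexOn ℝ Set.univ (fun s : ℝ => Φ₂ (s ^ 2))) :
    ∀ (u v u' v' : EuclideanSpace ℝ (Fin N) → ℝ)
      (gu gv gu' gv' : EuclideanSpace ℝ (Fin N) → EuclideanSpace ℝ (Fin N)),
      MemLp u 2 (volume.restrict Ω) → MemLp v 2 (volume.restrict Ω) →
      MemLp u' 2 (volume.restrict Ω) → MemLp v' 2 (volume.restrict Ω) →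
      MemLp gu 2 (volume.restrict Ω) → MemLp gv 2 (volume.restrict Ω) →
      MemLp gu' 2 (volume.restrict Ω) → MemLp gv' 2 (volume.restrict Ω) →
      Integrable (monoIntegrand φ₁ φ₂ u v u' v' gu gv gu' gv') (volume.restrict Ω) →
      ¬ (u =ᶠ[ae (volume.restrict Ω)] u' ∧ gu =ᶠ[ae (volume.restrict Ω)] gu'
          ∧ v =ᶠ[ae (volume.restrict Ω)] v' ∧ gv =ᶠ[ae (volume.restrict Ω)] gv') →
      0 < ∫ x in Ω, monoIntegrand φ₁ φ₂ u v u' v' gu gv gu' gv' x := by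
  intro u v u' v' gu gv gu' gv' _ _ _ _ _ _ _ _ hint hne
  have hφ₁ : ∀ s, 0 ≤ s → 0 < φ₁ s := fun s hs => h10.trans_le (hb1 s hs).1
  have hφ₂ : ∀ s, 0 ≤ s → 0 < φ₂ s := fun s hs => h20.trans_le (hb2 s hs).1
  have hψ₁ := strictMonoOn_mul_apply_sq_half hc1 hφ₁ hΦ₁ hconv1
  have hψ₂ := strictMonoOn_mul_apply_sq_half hc2 hφ₂ hΦ₂ hconv2
  have hnonneg : 0 ≤ monoIntegrand φ₁ φ₂ u v u' v' gu gv gu' gv' := fun x => by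
    rw [monoIntegrand_eq]
    exact add_nonneg (inner_radialField_sub_nonneg hφ₁ hψ₁ _ _)
      (inner_radialField_sub_nonneg hφ₂ hψ₂ _ _)
  have hzero : ∀ x, monoIntegrand φ₁ φ₂ u v u' v' gu gv gu' gv' x = 0 →
      u x = u' x ∧ gu x = gu' x ∧ v x = v' x ∧ gv x = gv' x := fun x hx => by
    rw [monoIntegrand_eq, add_eq_zero_iff_of_nonneg (inner_radialField_sub_nonneg hφ₁ hψ₁ _ _)
      (inner_radialField_sub_nonneg hφ₂ hψ₂ _ _), inner_radialField_sub_eq_zero_iff hφ₁ hψ₁,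
      inner_radialField_sub_eq_zero_iff hφ₂ hψ₂] at hx
    simpa [and_assoc] using hx
  refine (integral_nonneg hnonneg).lt_of_ne fun h => hne ?_
  have hall := ((integral_eq_zero_iff_of_nonneg hnonneg hint).1 h.symm).mono fun x hx => hzero x hx
  exact ⟨hall.mono fun x hx => hx.1, hall.mono fun x hx => hx.2.1,
    hall.mono fun x hx => hx.2.2.1, hall.mono fun x hx => hx.2.2.2⟩

theorem stmt5 (N : ℕ) (Ω : Set (EuclideanSpace ℝ (Fin N)))
    (hΩo : IsOpen Ω) (hΩb : Bornology.IsBounded Ω)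
    (φ₁ φ₂ : ℝ → ℝ) (φ₁0 φ₁m φ₂0 φ₂m : ℝ) (h10 : 0 < φ₁0) (h20 : 0 < φ₂0)
    (hc1 : ContinuousOn φ₁ (Set.Ici 0)) (hc2 : ContinuousOn φ₂ (Set.Ici 0))
    (hb1 : ∀ s : ℝ, 0 ≤ s → φ₁0 ≤ φ₁ s ∧ φ₁ s ≤ φ₁m)
    (hb2 : ∀ s : ℝ, 0 ≤ s → φ₂0 ≤ φ₂ s ∧ φ₂ s ≤ φ₂m)
    (Φ₁ Φ₂ : ℝ → ℝ)
    (hΦ₁ : ∀ s, Φ₁ s = ∫ τ in (0:ℝ)..s, φ₁ τ)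
    (hΦ₂ : ∀ s, Φ₂ s = ∫ τ in (0:ℝ)..s, φ₂ τ)
    (hconv1 : StrictConvexOn ℝ Set.univ (fun s : ℝ => Φ₁ (s ^ 2)))
    (hconv2 : StrictConvexOn ℝ Set.univ (fun s : ℝ => Φ₂ (s ^ 2))) :
    ∀ (u v u' v' : EuclideanSpace ℝ (Fin N) → ℝ)
      (gu gv gu' gv' : EuclideanSpace ℝ (Fin N) → EuclideanSpace ℝ (Fin N)),
      MemLp u 2 (volume.restrict Ω) → MemLp v 2 (volume.restrict Ω) →
      MemLp u' 2 (volume.restrict Ω) → MemLp v' 2 (volume.restrict Ω) →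
      MemLp gu 2 (volume.restrict Ω) → MemLp gv 2 (volume.restrict Ω) →
      MemLp gu' 2 (volume.restrict Ω) → MemLp gv' 2 (volume.restrict Ω) →
      Integrable (monoIntegrand φ₁ φ₂ u v u' v' gu gv gu' gv') (volume.restrict Ω) →
      ¬ (u =ᶠ[ae (volume.restrict Ω)] u' ∧ gu =ᶠ[ae (volume.restrict Ω)] gu'
          ∧ v =ᶠ[ae (volume.restrict Ω)] v' ∧ gv =ᶠ[ae (volume.restrict Ω)] gv') →
      0 < ∫ x in Ω, monoIntegrand φ₁ φ₂ u v u' v' gu gv gu' gv' x :=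
  stmt5_general N Ω φ₁ φ₂ φ₁0 φ₁m φ₂0 φ₂m h10 h20 hc1 hc2 hb1 hb2 Φ₁ Φ₂ hΦ₁ hΦ₂ hconv1 hconv2
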